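/- In ℝ^{p,q} with n = p+q, the function J(x) = sgn(Q(x)) · x / |Q(x)|^{n/2} is left monogenic on the open set {x : Q(x) ≠ 0}: applying the Dirac operator D = Σ_{j≤p} e_j ∂/∂x_j - Σ_{j>p} e_j ∂/∂x_j gives D J = 0. (Here x = Σ x_j e_j ∈ V ⊂ Cl(ℝ^{p,q}) and x² = -Q(x).) -/

import Mathlib

/-!
Write `J = g(Q) x` with `g t = sign t / |t| ^ (n/2) = t * |t| ^ (-n/2 - 1)`, so that
`t g'(t) = -(n/2) g(t)`. For any scalar `f`, the Leibniz rule gives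
`D (f x) = f · Dx + (Df) x`, and `Dx = -n`; for `f = g ∘ Q`, `Df = g'(Q) · DQ = 2 g'(Q) x`,
hence `D J = -n g(Q) + 2 g'(Q) x² = -n g(Q) - 2 Q g'(Q) = 0`.
-/

open CliffordAlgebra

/-- The quadratic form of `ℝ^{p,q}`: `Q x = x₁²+⋯+x_p² - x_{p+1}²-⋯-x_{p+q}²`. -/
noncomputable def Qpq (p q : ℕ) : QuadraticForm ℝ (Fin (p + q) → ℝ) :=
  QuadraticMap.weightedSumSquares ℝ (fun i : Fin (p + q) => if (i : ℕ) < p then (1 : ℝ) else -1)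

theorem Real.sign_div_abs_rpow (t r : ℝ) : Real.sign t / |t| ^ r = t * |t| ^ (-r - 1) := by
  rcases lt_trichotomy t 0 with ht | rfl | ht
  · rw [Real.sign_of_neg ht, abs_of_neg ht, Real.rpow_sub_one (by linarith),
      Real.rpow_neg (by linarith)]
    field_simp [ht.ne]
  · simp
  · rw [Real.sign_of_pos ht, abs_of_pos ht, Real.rpow_sub_one ht.ne', Real.rpow_neg ht.le]
    field_simp

theorem hasDerivAt_mul_abs_rpow (a : ℝ) {t : ℝ} (ht : t ≠ 0) :
    HasDerivAt (fun t => t * |t| ^ a) ((a + 1) * |t| ^ a) t := by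
  refine ((hasDerivAt_id' t).mul ((hasDerivAt_abs ht).rpow_const (p := a)
    (Or.inl (abs_ne_zero.2 ht)))).congr_deriv ?_
  have hpow : |t| ^ (a - 1) * |t| = |t| ^ a := by
    rw [Real.rpow_sub_one (abs_ne_zero.2 ht), div_mul_cancel₀ _ (abs_ne_zero.2 ht)]
  have hsign : t * (SignType.sign t : ℝ) = |t| := self_mul_sign t
  linear_combination a * hpow + a * (abs t) ^ (a - 1) * hsign

namespace CliffordAlgebra

variable {R A F : Type*} [CommRing R] [Ring A] [Algebra R A]

theorem map_ι_mul_self {M : Type*} [AddCommGroup M] [Module R M] {Q : QuadraticForm R M}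
    [FunLike F (CliffordAlgebra Q) A] [AlgHomClass F R (CliffordAlgebra Q) A] (φ : F) (v : M) :
    φ (ι Q v) * φ (ι Q v) = algebraMap R A (Q v) := by
  rw [← map_mul, ι_sq_scalar, AlgHomClass.commutes]

theorem sum_smul_map_ι_single {n : ℕ} {Q : QuadraticForm R (Fin n → R)}
    [FunLike F (CliffordAlgebra Q) A] [AlgHomClass F R (CliffordAlgebra Q) A]
    (φ : F) (y : Fin n → R) :
    ∑ j, y j • φ (ι Q (Pi.single j 1)) = φ (ι Q y) := by
  simp_rw [← map_smul, ← map_sum, ← Pi.single_smul', smul_eq_mul, mul_one,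
    Finset.univ_sum_single]

end CliffordAlgebra

def pqSign (p : ℕ) {n : ℕ} (j : Fin n) : ℝ := if (j : ℕ) < p then 1 else -1

theorem pqSign_mul_self (p : ℕ) {n : ℕ} (j : Fin n) : pqSign p j * pqSign p j = 1 := by
  unfold pqSign
  split_ifs <;> norm_num

section PseudoEuclidean

variable {p q : ℕ}

theorem Qpq_apply (y : Fin (p + q) → ℝ) : Qpq p q y = ∑ i, pqSign p i * (y i * y i) := by
  simp [Qpq, pqSign, QuadraticMap.weightedSumSquares_apply]

theorem Qpq_single (j : Fin (p + q)) : Qpq p q (Pi.single j 1) = pqSign p j := by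
  simp [Qpq_apply, Pi.single_apply]

theorem hasFDerivAt_Qpq (x : Fin (p + q) → ℝ) :
    HasFDerivAt (Qpq p q)
      (∑ i, (2 * pqSign p i * x i) • ContinuousLinearMap.proj (R := ℝ) (φ := fun _ => ℝ) i)
      x := by
  rw [show ⇑(Qpq p q) = fun y => ∑ i, pqSign p i * (y i * y i) from funext Qpq_apply]
  refine HasFDerivAt.fun_sum fun i _ => ?_
  have hi := hasFDerivAt_apply (𝕜 := ℝ) (F' := fun _ : Fin (p + q) => ℝ) i x
  refine ((hi.fun_mul hi).const_mul (pqSign p i)).congr_fderiv ?_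
  ext v
  simp only [smul_add, add_apply, smul_apply, ContinuousLinearMap.proj_apply, smul_eq_mul]
  ring

theorem fderiv_Qpq_single (x : Fin (p + q) → ℝ) (j : Fin (p + q)) :
    fderiv ℝ (Qpq p q) x (Pi.single j 1) = 2 * pqSign p j * x j := by
  simp [(hasFDerivAt_Qpq x).fderiv, Pi.single_apply]

variable {A F : Type*} [NormedRing A] [NormedAlgebra ℝ A]
  [FunLike F (CliffordAlgebra (-(Qpq p q))) A]
  [AlgHomClass F ℝ (CliffordAlgebra (-(Qpq p q))) A]

noncomputable def pqDirac (φ : F) (f : (Fin (p + q) → ℝ) → A) (x : Fin (p + q) → ℝ) :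
    A :=
  ∑ j, pqSign p j • (φ (ι (-(Qpq p q)) (Pi.single j 1)) * fderiv ℝ f x (Pi.single j 1))

theorem sum_pqSign_smul_map_ι_single_mul_self (φ : F) :
    ∑ j, pqSign p j •
        (φ (ι (-(Qpq p q)) (Pi.single j 1)) * φ (ι (-(Qpq p q)) (Pi.single j 1)))
      = (-(p + q : ℝ)) • 1 := by
  simp_rw [map_ι_mul_self, neg_apply, Qpq_single, Algebra.algebraMap_eq_smul_one, smul_smul,
    mul_neg, pqSign_mul_self, ← Finset.sum_smul]
  simp

theorem pqDirac_smul_map_ι (φ : F) {f : (Fin (p + q) → ℝ) → ℝ}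
    {f' : (Fin (p + q) → ℝ) →L[ℝ] ℝ} {x : Fin (p + q) → ℝ} (hf : HasFDerivAt f f' x) :
    pqDirac φ (fun y => f y • φ (ι (-(Qpq p q)) y)) x
      = (-(p + q) * f x) • 1 +
        (∑ j, (pqSign p j * f' (Pi.single j 1)) • φ (ι (-(Qpq p q)) (Pi.single j 1))) *
          φ (ι (-(Qpq p q)) x) := by
  let ψ : (Fin (p + q) → ℝ) →L[ℝ] A :=
    LinearMap.toContinuousLinearMap ((AlgHomClass.toAlgHom φ).toLinearMap ∘ₗ ι (-(Qpq p q)))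
  have hψ : ∀ y, ψ y = φ (ι (-(Qpq p q)) y) := fun _ => rfl
  have hd : fderiv ℝ (fun y => f y • φ (ι (-(Qpq p q)) y)) x
      = f x • ψ + f'.smulRight (ψ x) :=
    (hf.smul ψ.hasFDerivAt).fderiv
  simp only [pqDirac, hd, add_apply, smul_apply, ContinuousLinearMap.smulRight_apply, mul_add,
    smul_add, Finset.sum_add_distrib, mul_smul_comm, smul_smul, Finset.sum_mul, smul_mul_assoc]
  simp_rw [hψ, mul_comm _ (f x), ← smul_smul, ← Finset.smul_sum,
    sum_pqSign_smul_map_ι_single_mul_self]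

theorem pqDirac_comp_Qpq_smul_map_ι (φ : F) {g : ℝ → ℝ} {g' : ℝ}
    {x : Fin (p + q) → ℝ} (hg : HasDerivAt g g' (Qpq p q x)) :
    pqDirac φ (fun y => g (Qpq p q y) • φ (ι (-(Qpq p q)) y)) x
      = (-(p + q) * g (Qpq p q x) - 2 * g' * Qpq p q x) • 1 := by
  have hQ : HasFDerivAt (Qpq p q) (fderiv ℝ (Qpq p q) x) x :=
    (hasFDerivAt_Qpq x).differentiableAt.hasFDerivAt
  rw [pqDirac_smul_map_ι φ (f := fun y => g (Qpq p q y)) (hg.comp_hasFDerivAt x hQ)]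
  simp only [smul_apply, fderiv_Qpq_single, smul_eq_mul]
  have hcoeff : ∀ j, pqSign p j * (g' * (2 * pqSign p j * x j)) = (2 * g') * x j := fun j => by
    linear_combination (2 * g' * x j) * pqSign_mul_self p j
  simp_rw [hcoeff, ← smul_smul, ← Finset.smul_sum, sum_smul_map_ι_single, smul_mul_assoc,
    map_ι_mul_self, neg_apply, Algebra.algebraMap_eq_smul_one, smul_smul, ← add_smul]
  congr 1
  ring

end PseudoEuclidean

/-- in `ℝ^{p,q}` (with `n = p+q`), the function
`J(x) = sgn(Q x) · x / |Q x|^{n/2}` (valued in `V ⊂ Cl(ℝ^{p,q})`, convention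
`v² = -Q v`) is left monogenic on `{x : Q x ≠ 0}`: applying the Dirac operator
`D = Σ_{j≤p} e_j ∂/∂x_j - Σ_{j>p} e_j ∂/∂x_j` gives `D J = 0`.
(The Clifford algebra is transported along an algebra isomorphism `φ` to a real
normed algebra `A` so that derivatives of `Cl`-valued functions make sense.) -/
theorem inversion_kernel_left_monogenic (p q : ℕ)
    (A : Type*) [NormedRing A] [NormedAlgebra ℝ A]
    (φ : CliffordAlgebra (-(Qpq p q)) ≃ₐ[ℝ] A)
    (J : (Fin (p + q) → ℝ) → A)
    (hJ : ∀ y, J y = (Real.sign (Qpq p q y) / |Qpq p q y| ^ (((p + q : ℕ) : ℝ) / 2)) •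
      φ (ι (-(Qpq p q)) y))
    (x : Fin (p + q) → ℝ) (hx : Qpq p q x ≠ 0) :
    ∑ j : Fin (p + q), (if (j : ℕ) < p then (1 : ℝ) else -1) •
      (φ (ι (-(Qpq p q)) (Pi.single j 1)) * fderiv ℝ J x (Pi.single j 1)) = 0 := by
  set r : ℝ := ((p + q : ℕ) : ℝ) / 2
  have hJ' : J = fun y => (Qpq p q y * |Qpq p q y| ^ (-r - 1)) • φ (ι (-(Qpq p q)) y) :=
    funext fun y => by rw [hJ, Real.sign_div_abs_rpow]
  have hD := pqDirac_comp_Qpq_smul_map_ι φ (hasDerivAt_mul_abs_rpow (-r - 1) hx)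
  rw [← hJ'] at hD
  change pqDirac φ J x = 0
  rw [hD, ← zero_smul ℝ (1 : A)]
  congr 1
  push_cast [r]
  ring
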